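/- The maps ρ̌ : [0,V] → [0, ρ̌_0] and ρ̂ : [0,V] → [0, ρ̂_0] are continuous, strictly decreasing bijections; in particular they are invertible, and their inverse functions are strictly decreasing. -/

import Mathlib

/-!
Write `m u = ρ̃_u / α` for the point where `f' = u`, so that
`φ_u(ρ) = α (f (m u) - u m u) + u ρ`. The function `f - φ_u` is strictly concave and `≤ 0` at
both ends of `[0, R]`, hence `{f ≥ φ_u} = [ρ̌_u, ρ̂_u]` and `I_u = {ρ̌_u, ρ̂_u}`; for `u < V` the
tangency point `α m u` lies strictly inside, because `α f (m u) < f (α m u)` by concavity and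
`f 0 = 0`. The strict tangent-line inequality of `f` at `m u₁`, evaluated at `m u₂`, compares
`φ_{u₁}` with `φ_{u₂}` and shows that `ρ̌` and `ρ̂` decrease strictly. For surjectivity, apply the
intermediate value theorem to `u ↦ φ_u(x)` (its intercept is `R`-Lipschitz in `u`), starting from
the slope whose tangency point is `x`. A monotone map of an interval onto an interval is
continuous.
-/

open Set

theorem StrictConcaveOn.lt_add_mul_sub_of_hasDerivAt {s : Set ℝ} {g : ℝ → ℝ} {g' p y : ℝ}
    (hg : StrictConcaveOn ℝ s g) (hp : p ∈ s) (hy : y ∈ s) (hne : y ≠ p) (hd : HasDerivAt g g' p) :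
    g y < g p + g' * (y - p) := by
  rcases hne.lt_or_gt with hyp | hpy
  · have := hg.lt_slope_of_hasDerivAt hy hp hyp hd
    rw [slope_def_field, lt_div_iff₀ (sub_pos.2 hyp)] at this
    linarith
  · have := hg.slope_lt_of_hasDerivAt hp hy hpy hd
    rw [slope_def_field, div_lt_iff₀ (sub_pos.2 hpy)] at this
    linarith

theorem ConcaveOn.sub_affine {s : Set ℝ} {g : ℝ → ℝ} (hg : ConcaveOn ℝ s g) (c u : ℝ) :
    ConcaveOn ℝ s (fun x => g x - (c + u * x)) :=
  hg.sub ((convexOn_const c hg.1).add ((LinearMap.mulLeft ℝ u).convexOn hg.1))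

theorem StrictConcaveOn.sub_affine {s : Set ℝ} {g : ℝ → ℝ} (hg : StrictConcaveOn ℝ s g) (c u : ℝ) :
    StrictConcaveOn ℝ s (fun x => g x - (c + u * x)) :=
  hg.sub_convexOn ((convexOn_const c hg.1).add ((LinearMap.mulLeft ℝ u).convexOn hg.1))

section Superlevel

variable {g : ℝ → ℝ} {a b c u p q x : ℝ}

theorem ConcaveOn.add_mul_le_iff_mem_Icc (hg : ConcaveOn ℝ (Icc a b) g)
    (hgc : ContinuousOn g (Icc a b)) (ha : g a ≤ c + u * a) (hb : g b ≤ c + u * b)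
    (hp : IsLeast {x | x ∈ Icc a b ∧ g x = c + u * x} p)
    (hq : IsGreatest {x | x ∈ Icc a b ∧ g x = c + u * x} q) (hx : x ∈ Icc a b) :
    c + u * x ≤ g x ↔ x ∈ Icc p q := by
  have hcont : ContinuousOn (fun y => g y - (c + u * y)) (Icc a b) := by fun_prop
  constructor
  · intro hle
    constructor
    · by_contra! hxp
      obtain ⟨y, hy, hy0⟩ := intermediate_value_Icc hx.1
        (hcont.mono (Icc_subset_Icc le_rfl hx.2)) ⟨sub_nonpos.2 ha, sub_nonneg.2 hle⟩
      exact (hp.2 ⟨⟨hy.1, hy.2.trans hx.2⟩, sub_eq_zero.1 hy0⟩).not_gt (hy.2.trans_lt hxp)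
    · by_contra! hqx
      obtain ⟨y, hy, hy0⟩ := intermediate_value_Icc' hx.2
        (hcont.mono (Icc_subset_Icc hx.1 le_rfl)) ⟨sub_nonpos.2 hb, sub_nonneg.2 hle⟩
      exact (hq.2 ⟨⟨hx.1.trans hy.1, hy.2⟩, sub_eq_zero.1 hy0⟩).not_gt (hqx.trans_le hy.1)
  · intro hxpq
    have := (hg.sub_affine c u).min_le_of_mem_Icc hp.1.1 hq.1.1 hxpq
    simp only [hp.1.2, hq.1.2, sub_self, min_self] at this
    linarith

theorem StrictConcaveOn.add_mul_lt_iff_mem_Ioo (hg : StrictConcaveOn ℝ (Icc a b) g)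
    (hgc : ContinuousOn g (Icc a b)) (ha : g a ≤ c + u * a) (hb : g b ≤ c + u * b)
    (hp : IsLeast {x | x ∈ Icc a b ∧ g x = c + u * x} p)
    (hq : IsGreatest {x | x ∈ Icc a b ∧ g x = c + u * x} q) (hx : x ∈ Icc a b) :
    c + u * x < g x ↔ x ∈ Ioo p q := by
  constructor
  · intro hlt
    obtain ⟨hpx, hxq⟩ := (hg.concaveOn.add_mul_le_iff_mem_Icc hgc ha hb hp hq hx).1 hlt.le
    refine ⟨hpx.lt_of_ne ?_, hxq.lt_of_ne ?_⟩ <;> rintro rfl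
    · exact hlt.ne' hp.1.2
    · exact hlt.ne' hq.1.2
  · intro hxpq
    have hpq := hxpq.1.trans hxpq.2
    have := (hg.sub_affine c u).lt_on_openSegment hp.1.1 hq.1.1 hpq.ne
      (by rwa [openSegment_eq_Ioo hpq])
    simp only [hp.1.2, hq.1.2, sub_self, min_self] at this
    linarith

end Superlevel

theorem AntitoneOn.continuousOn_of_surjOn_Icc {f : ℝ → ℝ} {a b : ℝ} (hf : AntitoneOn f (Icc a b))
    (hs : SurjOn f (Icc a b) (Icc (f b) (f a))) : ContinuousOn f (Icc a b) := by
  have hmaps := hf.mapsTo_Icc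
  let F : Icc a b → (Icc (f b) (f a))ᵒᵈ := fun x => OrderDual.toDual (hmaps.restrict f _ _ x)
  have hF : Continuous F := Monotone.continuous_of_surjective (fun x y hxy => hf x.2 y.2 hxy)
    (OrderDual.toDual.surjective.comp (hmaps.restrict_surjective_iff.2 hs))
  rw [continuousOn_iff_continuous_domRestrict]
  exact continuous_subtype_val.comp (continuous_ofDual.comp hF)

theorem StrictAntiOn.exists_strictAntiOn_invOn {α β : Type*} [LinearOrder α] [LinearOrder β]
    [Nonempty α] {f : α → β} {s : Set α} {t : Set β} (hf : StrictAntiOn f s) (hs : SurjOn f s t) :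
    ∃ g : β → α, (∀ x ∈ t, g x ∈ s ∧ f (g x) = x) ∧ (∀ u ∈ s, g (f u) = u) ∧
      StrictAntiOn g t := by
  have hinv : ∀ x ∈ t, Function.invFunOn f s x ∈ s ∧ f (Function.invFunOn f s x) = x := fun x hx =>
    ⟨hs.mapsTo_invFunOn hx, hs.rightInvOn_invFunOn hx⟩
  refine ⟨Function.invFunOn f s, hinv, fun u hu => hf.injOn.leftInvOn_invFunOn hu, ?_⟩
  intro x hx y hy hxy
  rw [← (hinv x hx).2, ← (hinv y hy).2] at hxy
  exact (hf.lt_iff_gt (hinv x hx).1 (hinv y hy).1).1 hxy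

/-- The paper's `φ_u`, with the tangency point `ρ̃_u` written as `α * m u`. -/
def tangentLine (f m : ℝ → ℝ) (α u x : ℝ) : ℝ := α * (f (m u) - u * m u) + u * x

/-- The paper's `I_u`. -/
def contactSet (f m : ℝ → ℝ) (R α u : ℝ) : Set ℝ := {x | x ∈ Icc 0 R ∧ f x = tangentLine f m α u x}

structure FluxTangents (f f' m : ℝ → ℝ) (R : ℝ) : Prop where
  pos : 0 < R
  hasDerivAt : ∀ x ∈ Icc 0 R, HasDerivAt f (f' x) x
  strictAntiOn_deriv : StrictAntiOn f' (Icc 0 R)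
  map_zero : f 0 = 0
  map_right : f R = 0
  mapsTo : MapsTo m (Icc 0 (f' 0)) (Icc 0 R)
  deriv_apply : ∀ u ∈ Icc 0 (f' 0), f' (m u) = u

namespace FluxTangents

variable {f f' m : ℝ → ℝ} {R u y : ℝ}

theorem continuousOn (h : FluxTangents f f' m R) : ContinuousOn f (Icc 0 R) :=
  fun x hx => (h.hasDerivAt x hx).continuousAt.continuousWithinAt

theorem strictConcaveOn (h : FluxTangents f f' m R) : StrictConcaveOn ℝ (Icc 0 R) f := by
  refine StrictAntiOn.strictConcaveOn_of_deriv (convex_Icc 0 R) h.continuousOn ?_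
  rw [interior_Icc]
  intro x hx y hy hxy
  rw [(h.hasDerivAt x (Ioo_subset_Icc_self hx)).deriv,
    (h.hasDerivAt y (Ioo_subset_Icc_self hy)).deriv]
  exact h.strictAntiOn_deriv (Ioo_subset_Icc_self hx) (Ioo_subset_Icc_self hy) hxy

theorem deriv_zero_pos (h : FluxTangents f f' m R) : 0 < f' 0 := by
  have := h.strictConcaveOn.lt_add_mul_sub_of_hasDerivAt (left_mem_Icc.2 h.pos.le)
    (right_mem_Icc.2 h.pos.le) h.pos.ne' (h.hasDerivAt 0 (left_mem_Icc.2 h.pos.le))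
  rw [h.map_zero, h.map_right, zero_add, sub_zero] at this
  exact pos_of_mul_pos_left this h.pos.le

theorem zero_mem (h : FluxTangents f f' m R) : (0 : ℝ) ∈ Icc 0 (f' 0) :=
  left_mem_Icc.2 h.deriv_zero_pos.le

theorem sub_mul_lt_of_ne (h : FluxTangents f f' m R) (hu : u ∈ Icc 0 (f' 0)) (hy : y ∈ Icc 0 R)
    (hne : y ≠ m u) : f y - u * y < f (m u) - u * m u := by
  have := h.strictConcaveOn.lt_add_mul_sub_of_hasDerivAt (h.mapsTo hu) hy hne
    (h.hasDerivAt _ (h.mapsTo hu))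
  rw [h.deriv_apply u hu] at this
  linarith

theorem sub_mul_le (h : FluxTangents f f' m R) (hu : u ∈ Icc 0 (f' 0)) (hy : y ∈ Icc 0 R) :
    f y - u * y ≤ f (m u) - u * m u := by
  rcases eq_or_ne y (m u) with rfl | hne
  · rfl
  · exact (h.sub_mul_lt_of_ne hu hy hne).le

theorem m_eq_zero_iff (h : FluxTangents f f' m R) (hu : u ∈ Icc 0 (f' 0)) :
    m u = 0 ↔ u = f' 0 := by
  constructor
  · intro hm
    rw [← h.deriv_apply u hu, hm]
  · rintro rfl
    exact h.strictAntiOn_deriv.injOn (h.mapsTo hu) (left_mem_Icc.2 h.pos.le) (h.deriv_apply _ hu)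

theorem antitoneOn_m (h : FluxTangents f f' m R) : AntitoneOn m (Icc 0 (f' 0)) := by
  intro u₁ hu₁ u₂ hu₂ hle
  rcases hle.eq_or_lt with rfl | hlt
  · rfl
  have h₁ := h.sub_mul_le hu₁ (h.mapsTo hu₂)
  have h₂ := h.sub_mul_le hu₂ (h.mapsTo hu₁)
  nlinarith

theorem exists_m_eq (h : FluxTangents f f' m R) (hy : y ∈ Icc 0 (m 0)) :
    ∃ u ∈ Icc 0 (f' 0), m u = y := by
  have hm0 := h.mapsTo h.zero_mem
  have hyR : y ∈ Icc 0 R := ⟨hy.1, hy.2.trans hm0.2⟩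
  have hu : f' y ∈ Icc 0 (f' 0) := by
    refine ⟨?_, h.strictAntiOn_deriv.antitoneOn (left_mem_Icc.2 h.pos.le) hyR hy.1⟩
    rw [← h.deriv_apply 0 h.zero_mem]
    exact h.strictAntiOn_deriv.antitoneOn hyR hm0 hy.2
  exact ⟨f' y, hu, h.strictAntiOn_deriv.injOn (h.mapsTo hu) hyR (h.deriv_apply _ hu)⟩

theorem continuousOn_tangentLine (h : FluxTangents f f' m R) (α x : ℝ) :
    ContinuousOn (fun u => tangentLine f m α u x) (Icc 0 (f' 0)) := by
  have hM : LipschitzOnWith (Real.toNNReal R) (fun u => f (m u) - u * m u) (Icc 0 (f' 0)) := by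
    refine LipschitzOnWith.of_le_add_mul' R fun u₁ hu₁ u₂ hu₂ => ?_
    have htan := h.sub_mul_le hu₂ (h.mapsTo hu₁)
    have hm := h.mapsTo hu₁
    have hshift : (u₂ - u₁) * m u₁ ≤ |u₁ - u₂| * R :=
      calc (u₂ - u₁) * m u₁ ≤ |u₁ - u₂| * m u₁ :=
            mul_le_mul_of_nonneg_right (abs_sub_comm u₁ u₂ ▸ le_abs_self _) hm.1
        _ ≤ |u₁ - u₂| * R := mul_le_mul_of_nonneg_left hm.2 (abs_nonneg _)
    rw [Real.dist_eq]
    linarith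
  exact (continuousOn_const.mul hM.continuousOn).add (continuousOn_id.mul continuousOn_const)

end FluxTangents

structure ContactPoints (f f' m : ℝ → ℝ) (R α : ℝ) (rc rh : ℝ → ℝ) : Prop
    extends FluxTangents f f' m R where
  mem_Ioo : α ∈ Ioo 0 1
  isLeast : ∀ u ∈ Icc 0 (f' 0), IsLeast (contactSet f m R α u) (rc u)
  isGreatest : ∀ u ∈ Icc 0 (f' 0), IsGreatest (contactSet f m R α u) (rh u)

namespace ContactPoints

variable {f f' m rc rh : ℝ → ℝ} {R α u u' x : ℝ}

theorem map_endpoints_le (h : ContactPoints f f' m R α rc rh) (hu : u ∈ Icc 0 (f' 0)) :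
    f 0 ≤ tangentLine f m α u 0 ∧ f R ≤ tangentLine f m α u R := by
  have hM := h.sub_mul_le hu (left_mem_Icc.2 h.pos.le)
  rw [h.map_zero, mul_zero, sub_zero] at hM
  have hαM := mul_nonneg h.mem_Ioo.1.le hM
  unfold tangentLine
  rw [h.map_zero, h.map_right]
  constructor <;> nlinarith [hu.1, h.pos]

theorem tangentLine_le_iff (h : ContactPoints f f' m R α rc rh) (hu : u ∈ Icc 0 (f' 0))
    (hx : x ∈ Icc 0 R) : tangentLine f m α u x ≤ f x ↔ x ∈ Icc (rc u) (rh u) :=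
  h.strictConcaveOn.concaveOn.add_mul_le_iff_mem_Icc h.continuousOn (h.map_endpoints_le hu).1
    (h.map_endpoints_le hu).2 (h.isLeast u hu) (h.isGreatest u hu) hx

theorem tangentLine_lt_iff (h : ContactPoints f f' m R α rc rh) (hu : u ∈ Icc 0 (f' 0))
    (hx : x ∈ Icc 0 R) : tangentLine f m α u x < f x ↔ x ∈ Ioo (rc u) (rh u) :=
  h.strictConcaveOn.add_mul_lt_iff_mem_Ioo h.continuousOn (h.map_endpoints_le hu).1
    (h.map_endpoints_le hu).2 (h.isLeast u hu) (h.isGreatest u hu) hx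

theorem tangentLine_tangentPoint (α : ℝ) :
    tangentLine f m α u (α * m u) = α * f (m u) := by
  unfold tangentLine; ring

theorem tangentPoint_mem (h : ContactPoints f f' m R α rc rh) (hu : u ∈ Icc 0 (f' 0)) :
    α * m u ∈ Icc 0 R := by
  obtain ⟨hα₀, hα₁⟩ := h.mem_Ioo
  have hm := h.mapsTo hu
  exact ⟨mul_nonneg hα₀.le hm.1, (mul_le_of_le_one_left hm.1 hα₁.le).trans hm.2⟩

theorem tangentLine_tangentPoint_le (h : ContactPoints f f' m R α rc rh)
    (hu : u ∈ Icc 0 (f' 0)) : tangentLine f m α u (α * m u) ≤ f (α * m u) := by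
  obtain ⟨hα₀, hα₁⟩ := h.mem_Ioo
  have := h.strictConcaveOn.concaveOn.2 (h.mapsTo hu) (left_mem_Icc.2 h.pos.le) hα₀.le
    (sub_nonneg.2 hα₁.le) (add_sub_cancel α 1)
  simp only [smul_eq_mul, mul_zero, add_zero, h.map_zero] at this
  rwa [tangentLine_tangentPoint]

theorem tangentLine_tangentPoint_lt (h : ContactPoints f f' m R α rc rh)
    (hu : u ∈ Ico 0 (f' 0)) : tangentLine f m α u (α * m u) < f (α * m u) := by
  obtain ⟨hα₀, hα₁⟩ := h.mem_Ioo
  have hu' : u ∈ Icc 0 (f' 0) := Ico_subset_Icc_self hu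
  have := h.strictConcaveOn.2 (h.mapsTo hu') (left_mem_Icc.2 h.pos.le)
    (mt (h.m_eq_zero_iff hu').1 hu.2.ne) hα₀ (sub_pos.2 hα₁) (add_sub_cancel α 1)
  simp only [smul_eq_mul, mul_zero, add_zero, h.map_zero] at this
  rwa [tangentLine_tangentPoint]

theorem tangentPoint_mem_Icc (h : ContactPoints f f' m R α rc rh)
    (hu : u ∈ Icc 0 (f' 0)) : α * m u ∈ Icc (rc u) (rh u) :=
  (h.tangentLine_le_iff hu (h.tangentPoint_mem hu)).1 (h.tangentLine_tangentPoint_le hu)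

theorem tangentPoint_mem_Ioo (h : ContactPoints f f' m R α rc rh)
    (hu : u ∈ Ico 0 (f' 0)) : α * m u ∈ Ioo (rc u) (rh u) :=
  (h.tangentLine_lt_iff (Ico_subset_Icc_self hu)
    (h.tangentPoint_mem (Ico_subset_Icc_self hu))).1 (h.tangentLine_tangentPoint_lt hu)

theorem le_tangentLine_deriv_zero (h : ContactPoints f f' m R α rc rh) (hx : x ∈ Icc 0 R) :
    f x ≤ tangentLine f m α (f' 0) x := by
  have hV := right_mem_Icc.2 h.deriv_zero_pos.le
  have := h.sub_mul_le hV hx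
  rw [(h.m_eq_zero_iff hV).2 rfl, h.map_zero] at this
  simp only [tangentLine, (h.m_eq_zero_iff hV).2 rfl, h.map_zero]
  linarith

theorem eq_zero_of_mem_contactSet_deriv_zero (h : ContactPoints f f' m R α rc rh)
    (hx : x ∈ contactSet f m R α (f' 0)) : x = 0 := by
  have hV := right_mem_Icc.2 h.deriv_zero_pos.le
  have hm : m (f' 0) = 0 := (h.m_eq_zero_iff hV).2 rfl
  by_contra hne
  have := h.sub_mul_lt_of_ne hV hx.1 (by rwa [hm])
  rw [hx.2] at this
  simp only [tangentLine, hm, h.map_zero] at this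
  linarith

theorem rc_deriv_zero (h : ContactPoints f f' m R α rc rh) : rc (f' 0) = 0 :=
  h.eq_zero_of_mem_contactSet_deriv_zero (h.isLeast _ (right_mem_Icc.2 h.deriv_zero_pos.le)).1

theorem rh_deriv_zero (h : ContactPoints f f' m R α rc rh) : rh (f' 0) = 0 :=
  h.eq_zero_of_mem_contactSet_deriv_zero (h.isGreatest _ (right_mem_Icc.2 h.deriv_zero_pos.le)).1

theorem rc_eq_of_mem (h : ContactPoints f f' m R α rc rh) (hu : u ∈ Icc 0 (f' 0))
    (hx : x ∈ contactSet f m R α u) (hxm : x ≤ α * m u) : rc u = x := by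
  rcases hu.2.eq_or_lt with rfl | hlt
  · rw [h.rc_deriv_zero, h.eq_zero_of_mem_contactSet_deriv_zero hx]
  refine le_antisymm ((h.isLeast u hu).2 hx) (not_lt.1 fun hrc => ?_)
  have hx' : x ∈ Ioo (rc u) (rh u) :=
    ⟨hrc, hxm.trans_lt (h.tangentPoint_mem_Ioo ⟨hu.1, hlt⟩).2⟩
  exact ((h.tangentLine_lt_iff hu hx.1).2 hx').ne hx.2.symm

theorem rh_eq_of_mem (h : ContactPoints f f' m R α rc rh) (hu : u ∈ Icc 0 (f' 0))
    (hx : x ∈ contactSet f m R α u) (hxm : α * m u ≤ x) : rh u = x := by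
  rcases hu.2.eq_or_lt with rfl | hlt
  · rw [h.rh_deriv_zero, h.eq_zero_of_mem_contactSet_deriv_zero hx]
  refine le_antisymm (not_lt.1 fun hrh => ?_) ((h.isGreatest u hu).2 hx)
  have hx' : x ∈ Ioo (rc u) (rh u) :=
    ⟨(h.tangentPoint_mem_Ioo ⟨hu.1, hlt⟩).1.trans_le hxm, hrh⟩
  exact ((h.tangentLine_lt_iff hu hx.1).2 hx').ne hx.2.symm

/-- The left side is the line of slope `u₁` through the tangency point of `φ_{u₂}`. -/
theorem tangentLine_add_mul_lt (h : ContactPoints f f' m R α rc rh) {u₁ u₂ : ℝ}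
    (hu₁ : u₁ ∈ Icc 0 (f' 0)) (hu₂ : u₂ ∈ Icc 0 (f' 0)) (hne : u₁ ≠ u₂) (x : ℝ) :
    tangentLine f m α u₂ x + (u₁ - u₂) * (x - α * m u₂) < tangentLine f m α u₁ x := by
  have hm : m u₂ ≠ m u₁ := fun heq =>
    hne (by rw [← h.deriv_apply u₁ hu₁, ← h.deriv_apply u₂ hu₂, heq])
  have := mul_lt_mul_of_pos_left (h.sub_mul_lt_of_ne hu₁ (h.mapsTo hu₂) hm) h.mem_Ioo.1
  unfold tangentLine
  linarith

theorem strictAntiOn_rc (h : ContactPoints f f' m R α rc rh) : StrictAntiOn rc (Icc 0 (f' 0)) := by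
  intro u₁ hu₁ u₂ hu₂ hlt
  have hc := (h.isLeast u₂ hu₂).1
  have hbelow : rc u₂ ≤ α * m u₂ := (h.tangentPoint_mem_Icc hu₂).1
  have hkey := h.tangentLine_add_mul_lt hu₁ hu₂ hlt.ne (rc u₂)
  have hout : f (rc u₂) < tangentLine f m α u₁ (rc u₂) := by
    rw [hc.2]
    nlinarith
  have hle : rc u₂ ≤ rh u₁ := hbelow.trans <|
    (mul_le_mul_of_nonneg_left (h.antitoneOn_m hu₁ hu₂ hlt.le) h.mem_Ioo.1.le).trans
      (h.tangentPoint_mem_Icc hu₁).2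
  by_contra! hge
  exact hout.not_ge ((h.tangentLine_le_iff hu₁ hc.1).2 ⟨hge, hle⟩)

theorem strictAntiOn_rh (h : ContactPoints f f' m R α rc rh) : StrictAntiOn rh (Icc 0 (f' 0)) := by
  intro u₁ hu₁ u₂ hu₂ hlt
  have hc := (h.isGreatest u₂ hu₂).1
  by_contra! hge
  have habove : α * m u₁ ≤ rh u₂ := (h.tangentPoint_mem_Icc hu₁).2.trans hge
  have hkey := h.tangentLine_add_mul_lt hu₂ hu₁ hlt.ne' (rh u₂)
  have hin : tangentLine f m α u₁ (rh u₂) < f (rh u₂) := by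
    rw [hc.2]
    nlinarith
  exact hge.not_gt ((h.tangentLine_lt_iff hu₁ hc.1).1 hin).2

theorem exists_tangentPoint_eq (h : ContactPoints f f' m R α rc rh)
    (hx : x ∈ Icc 0 (α * m 0)) : ∃ u ∈ Icc 0 (f' 0), α * m u = x := by
  have hα := h.mem_Ioo.1
  obtain ⟨u, hu, hmu⟩ := h.exists_m_eq (y := x / α)
    ⟨div_nonneg hx.1 hα.le, (div_le_iff₀' hα).2 hx.2⟩
  exact ⟨u, hu, by rw [hmu, mul_div_cancel₀ x hα.ne']⟩

theorem exists_rc_eq (h : ContactPoints f f' m R α rc rh) (hu' : u' ∈ Icc 0 (f' 0))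
    (hx : x ∈ Icc 0 R) (h₀ : f x ≤ tangentLine f m α 0 x) (hu'x : tangentLine f m α u' x ≤ f x)
    (hxm : x ≤ α * m u') : ∃ u ∈ Icc 0 (f' 0), rc u = x := by
  obtain ⟨u, hu, hux⟩ := intermediate_value_Icc' hu'.1
    ((h.continuousOn_tangentLine α x).mono (Icc_subset_Icc le_rfl hu'.2)) ⟨hu'x, h₀⟩
  have hu₀ : u ∈ Icc 0 (f' 0) := ⟨hu.1, hu.2.trans hu'.2⟩
  refine ⟨u, hu₀, h.rc_eq_of_mem hu₀ ⟨hx, hux.symm⟩ (hxm.trans ?_)⟩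
  exact mul_le_mul_of_nonneg_left (h.antitoneOn_m hu₀ hu' hu.2) h.mem_Ioo.1.le

theorem exists_rh_eq (h : ContactPoints f f' m R α rc rh) (hu' : u' ∈ Icc 0 (f' 0))
    (hx : x ∈ Icc 0 R) (hu'x : tangentLine f m α u' x ≤ f x) (hxm : α * m u' ≤ x) :
    ∃ u ∈ Icc 0 (f' 0), rh u = x := by
  obtain ⟨u, hu, hux⟩ := intermediate_value_Icc hu'.2
    ((h.continuousOn_tangentLine α x).mono (Icc_subset_Icc hu'.1 le_rfl))
    ⟨hu'x, h.le_tangentLine_deriv_zero hx⟩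
  have hu₀ : u ∈ Icc 0 (f' 0) := ⟨hu'.1.trans hu.1, hu.2⟩
  refine ⟨u, hu₀, h.rh_eq_of_mem hu₀ ⟨hx, hux.symm⟩ (le_trans ?_ hxm)⟩
  exact mul_le_mul_of_nonneg_left (h.antitoneOn_m hu' hu₀ hu.1) h.mem_Ioo.1.le

theorem surjOn_rc (h : ContactPoints f f' m R α rc rh) :
    SurjOn rc (Icc 0 (f' 0)) (Icc 0 (rc 0)) := by
  intro x hx
  have hxR : x ∈ Icc 0 R := ⟨hx.1, hx.2.trans (h.isLeast 0 h.zero_mem).1.1.2⟩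
  have hxm : x ≤ α * m 0 := hx.2.trans (h.tangentPoint_mem_Icc h.zero_mem).1
  obtain ⟨u', hu', rfl⟩ := h.exists_tangentPoint_eq ⟨hx.1, hxm⟩
  refine h.exists_rc_eq hu' hxR (not_lt.1 fun hlt => ?_) (h.tangentLine_tangentPoint_le hu') le_rfl
  exact ((h.tangentLine_lt_iff h.zero_mem hxR).1 hlt).1.not_ge hx.2

theorem surjOn_rh (h : ContactPoints f f' m R α rc rh) :
    SurjOn rh (Icc 0 (f' 0)) (Icc 0 (rh 0)) := by
  intro x hx
  have hxR : x ∈ Icc 0 R := ⟨hx.1, hx.2.trans (h.isGreatest 0 h.zero_mem).1.1.2⟩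
  rcases le_or_gt x (α * m 0) with hxm | hxm
  · obtain ⟨u', hu', rfl⟩ := h.exists_tangentPoint_eq ⟨hx.1, hxm⟩
    exact h.exists_rh_eq hu' hxR (h.tangentLine_tangentPoint_le hu') le_rfl
  · refine h.exists_rh_eq h.zero_mem hxR ((h.tangentLine_le_iff h.zero_mem hxR).2 ⟨?_, hx.2⟩) hxm.le
    exact (h.tangentPoint_mem_Icc h.zero_mem).1.trans hxm.le

theorem bijOn_rc (h : ContactPoints f f' m R α rc rh) : BijOn rc (Icc 0 (f' 0)) (Icc 0 (rc 0)) := by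
  refine ⟨?_, h.strictAntiOn_rc.injOn, h.surjOn_rc⟩
  simpa only [h.rc_deriv_zero] using h.strictAntiOn_rc.antitoneOn.mapsTo_Icc

theorem bijOn_rh (h : ContactPoints f f' m R α rc rh) : BijOn rh (Icc 0 (f' 0)) (Icc 0 (rh 0)) := by
  refine ⟨?_, h.strictAntiOn_rh.injOn, h.surjOn_rh⟩
  simpa only [h.rh_deriv_zero] using h.strictAntiOn_rh.antitoneOn.mapsTo_Icc

theorem continuousOn_rc (h : ContactPoints f f' m R α rc rh) : ContinuousOn rc (Icc 0 (f' 0)) :=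
  h.strictAntiOn_rc.antitoneOn.continuousOn_of_surjOn_Icc <| by
    rw [h.rc_deriv_zero]
    exact h.surjOn_rc

theorem continuousOn_rh (h : ContactPoints f f' m R α rc rh) : ContinuousOn rh (Icc 0 (f' 0)) :=
  h.strictAntiOn_rh.antitoneOn.continuousOn_of_surjOn_Icc <| by
    rw [h.rh_deriv_zero]
    exact h.surjOn_rh

end ContactPoints

theorem HasDerivAt.eq_of_eqOn_Icc_id_mul {f v : ℝ → ℝ} {f' v' R : ℝ} (hR : 0 < R)
    (hfv : ∀ x ∈ Icc 0 R, f x = x * v x) (hf : HasDerivAt f f' 0) (hv : HasDerivAt v v' 0) :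
    f' = v 0 := by
  have h0 : (0 : ℝ) ∈ Icc 0 R := left_mem_Icc.2 hR.le
  have hmul : HasDerivWithinAt (fun x => x * v x) (1 * v 0 + 0 * v') (Icc 0 R) 0 :=
    ((hasDerivAt_id' 0).mul hv).hasDerivWithinAt
  rw [one_mul, zero_mul, add_zero] at hmul
  exact (uniqueDiffOn_Icc hR 0 h0).eq_deriv _ hf.hasDerivWithinAt (hmul.congr hfv (hfv 0 h0))

theorem HasDerivAt.const_mul_comp_div {f : ℝ → ℝ} {f' α x : ℝ} (hα : α ≠ 0)
    (hf : HasDerivAt f f' (x / α)) : HasDerivAt (fun y => α * f (y / α)) f' x := by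
  have h := (hf.comp x ((hasDerivAt_id' x).div_const α)).const_mul α
  rwa [mul_one_div, mul_div_cancel₀ f' hα] at h

theorem contactSet_div (f rt : ℝ → ℝ) (R : ℝ) {α : ℝ} (hα : α ≠ 0) (u : ℝ) :
    contactSet f (fun u => rt u / α) R α u =
      {ρ | ρ ∈ Icc 0 R ∧ f ρ = α * f (rt u / α) + u * (ρ - rt u)} := by
  have hline : ∀ x, tangentLine f (fun u => rt u / α) α u x = α * f (rt u / α) + u * (x - rt u) :=
    fun x => by
      simp only [tangentLine]
      field_simp
      ring
  simp only [contactSet, hline]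

theorem stmt_11_general
    (R β B α V : ℝ) (f v f' f'' v' : ℝ → ℝ)
    (hR : 0 < R) (hβ : 0 < β) (hα : α ∈ Set.Ioo (0:ℝ) 1)
    (hf0 : f 0 = 0) (hfR : f R = 0)
    (hfv : ∀ ρ ∈ Set.Icc (0:ℝ) R, f ρ = ρ * v ρ)
    (hfd1 : ∀ ρ ∈ Set.Icc (0:ℝ) R, HasDerivAt f (f' ρ) ρ)
    (hfd2 : ∀ ρ ∈ Set.Icc (0:ℝ) R, HasDerivAt f' (f'' ρ) ρ)
    (hconc : ∀ ρ ∈ Set.Icc (0:ℝ) R, -B ≤ f'' ρ ∧ f'' ρ ≤ -β)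
    (hvd : ∀ ρ ∈ Set.Icc (0:ℝ) R, HasDerivAt v (v' ρ) ρ)
    (hV : V = v 0)
    (rt : ℝ → ℝ)
    (hrt : ∀ u ∈ Set.Icc (0:ℝ) V, rt u ∈ Set.Icc (0:ℝ) (α * R) ∧
      HasDerivAt (fun x => α * f (x / α)) u (rt u))
    (rc rh : ℝ → ℝ)
    (hrc : ∀ u ∈ Set.Icc (0:ℝ) V, IsLeast
      {ρ : ℝ | ρ ∈ Set.Icc (0:ℝ) R ∧ f ρ = α * f (rt u / α) + u * (ρ - rt u)} (rc u))
    (hrh : ∀ u ∈ Set.Icc (0:ℝ) V, IsGreatest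
      {ρ : ℝ | ρ ∈ Set.Icc (0:ℝ) R ∧ f ρ = α * f (rt u / α) + u * (ρ - rt u)} (rh u))
    :
    ContinuousOn rc (Set.Icc (0:ℝ) V) ∧ StrictAntiOn rc (Set.Icc (0:ℝ) V) ∧
    Set.BijOn rc (Set.Icc (0:ℝ) V) (Set.Icc (0:ℝ) (rc 0)) ∧
    ContinuousOn rh (Set.Icc (0:ℝ) V) ∧ StrictAntiOn rh (Set.Icc (0:ℝ) V) ∧
    Set.BijOn rh (Set.Icc (0:ℝ) V) (Set.Icc (0:ℝ) (rh 0)) ∧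
    (∃ g : ℝ → ℝ,
      (∀ x ∈ Set.Icc (0:ℝ) (rc 0), g x ∈ Set.Icc (0:ℝ) V ∧ rc (g x) = x) ∧
      (∀ u ∈ Set.Icc (0:ℝ) V, g (rc u) = u) ∧
      StrictAntiOn g (Set.Icc (0:ℝ) (rc 0))) ∧
    ∃ g : ℝ → ℝ,
      (∀ x ∈ Set.Icc (0:ℝ) (rh 0), g x ∈ Set.Icc (0:ℝ) V ∧ rh (g x) = x) ∧
      (∀ u ∈ Set.Icc (0:ℝ) V, g (rh u) = u) ∧
      StrictAntiOn g (Set.Icc (0:ℝ) (rh 0)) := by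
  have hV' : V = f' 0 := hV.trans
    (HasDerivAt.eq_of_eqOn_Icc_id_mul hR hfv (hfd1 0 ⟨le_rfl, hR.le⟩) (hvd 0 ⟨le_rfl, hR.le⟩)).symm
  subst hV'
  have hf'anti : StrictAntiOn f' (Icc 0 R) :=
    strictAntiOn_of_hasDerivWithinAt_neg (convex_Icc 0 R)
      (fun x hx => (hfd2 x hx).continuousAt.continuousWithinAt)
      (fun x hx => (hfd2 x (interior_subset hx)).hasDerivWithinAt)
      fun x hx => by linarith [(hconc x (interior_subset hx)).2]
  have hm : ∀ u ∈ Icc 0 (f' 0), rt u / α ∈ Icc 0 R ∧ f' (rt u / α) = u := fun u hu => by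
    obtain ⟨⟨h0, hle⟩, hd⟩ := hrt u hu
    have hmem : rt u / α ∈ Icc 0 R := ⟨div_nonneg h0 hα.1.le, (div_le_iff₀' hα.1).2 hle⟩
    exact ⟨hmem, (hd.unique ((hfd1 _ hmem).const_mul_comp_div hα.1.ne')).symm⟩
  have h : ContactPoints f f' (fun u => rt u / α) R α rc rh :=
    { pos := hR, hasDerivAt := hfd1, strictAntiOn_deriv := hf'anti, map_zero := hf0,
      map_right := hfR, mapsTo := fun u hu => (hm u hu).1, deriv_apply := fun u hu => (hm u hu).2,
      mem_Ioo := hα, isLeast := fun u hu => contactSet_div f rt R hα.1.ne' u ▸ hrc u hu,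
      isGreatest := fun u hu => contactSet_div f rt R hα.1.ne' u ▸ hrh u hu }
  exact ⟨h.continuousOn_rc, h.strictAntiOn_rc, h.bijOn_rc, h.continuousOn_rh, h.strictAntiOn_rh,
    h.bijOn_rh, h.strictAntiOn_rc.exists_strictAntiOn_invOn h.surjOn_rc,
    h.strictAntiOn_rh.exists_strictAntiOn_invOn h.surjOn_rh⟩

theorem stmt_11
    (R β B α V : ℝ) (f v f' f'' v' : ℝ → ℝ)
    (hR : 0 < R) (hβ : 0 < β) (hB : 0 < B) (hα : α ∈ Set.Ioo (0:ℝ) 1)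
    (hf0 : f 0 = 0) (hfR : f R = 0)
    (hfv : ∀ ρ ∈ Set.Icc (0:ℝ) R, f ρ = ρ * v ρ)
    (hfd1 : ∀ ρ ∈ Set.Icc (0:ℝ) R, HasDerivAt f (f' ρ) ρ)
    (hfd2 : ∀ ρ ∈ Set.Icc (0:ℝ) R, HasDerivAt f' (f'' ρ) ρ)
    (hfc : ContinuousOn f'' (Set.Icc (0:ℝ) R))
    (hconc : ∀ ρ ∈ Set.Icc (0:ℝ) R, -B ≤ f'' ρ ∧ f'' ρ ≤ -β)
    (hvd : ∀ ρ ∈ Set.Icc (0:ℝ) R, HasDerivAt v (v' ρ) ρ)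
    (hv'neg : ∀ ρ ∈ Set.Ioo (0:ℝ) R, v' ρ < 0)
    (hvnn : ∀ ρ ∈ Set.Icc (0:ℝ) R, 0 ≤ v ρ)
    (hV : V = v 0)
    (rt : ℝ → ℝ)
    (hrt : ∀ u ∈ Set.Icc (0:ℝ) V, rt u ∈ Set.Icc (0:ℝ) (α * R) ∧
      HasDerivAt (fun x => α * f (x / α)) u (rt u))
    (rc rh : ℝ → ℝ)
    (hrc : ∀ u ∈ Set.Icc (0:ℝ) V, IsLeast
      {ρ : ℝ | ρ ∈ Set.Icc (0:ℝ) R ∧ f ρ = α * f (rt u / α) + u * (ρ - rt u)} (rc u))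
    (hrh : ∀ u ∈ Set.Icc (0:ℝ) V, IsGreatest
      {ρ : ℝ | ρ ∈ Set.Icc (0:ℝ) R ∧ f ρ = α * f (rt u / α) + u * (ρ - rt u)} (rh u))
    :
    ContinuousOn rc (Set.Icc (0:ℝ) V) ∧ StrictAntiOn rc (Set.Icc (0:ℝ) V) ∧
    Set.BijOn rc (Set.Icc (0:ℝ) V) (Set.Icc (0:ℝ) (rc 0)) ∧
    ContinuousOn rh (Set.Icc (0:ℝ) V) ∧ StrictAntiOn rh (Set.Icc (0:ℝ) V) ∧
    Set.BijOn rh (Set.Icc (0:ℝ) V) (Set.Icc (0:ℝ) (rh 0)) ∧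
    (∃ g : ℝ → ℝ,
      (∀ x ∈ Set.Icc (0:ℝ) (rc 0), g x ∈ Set.Icc (0:ℝ) V ∧ rc (g x) = x) ∧
      (∀ u ∈ Set.Icc (0:ℝ) V, g (rc u) = u) ∧
      StrictAntiOn g (Set.Icc (0:ℝ) (rc 0))) ∧
    ∃ g : ℝ → ℝ,
      (∀ x ∈ Set.Icc (0:ℝ) (rh 0), g x ∈ Set.Icc (0:ℝ) V ∧ rh (g x) = x) ∧
      (∀ u ∈ Set.Icc (0:ℝ) V, g (rh u) = u) ∧
      StrictAntiOn g (Set.Icc (0:ℝ) (rh 0)) :=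
  stmt_11_general R β B α V f v f' f'' v' hR hβ hα hf0 hfR hfv hfd1 hfd2 hconc hvd hV rt hrt rc rh
    hrc hrh
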